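/- For 1 ≤ i < j ≤ n, let N_{ij} ⊆ ℕ^n be finite sets, and suppose there exists a monomial ordering ≺ on ℕ^n (a linear order compatible with addition which is a well-ordering) such that α ≺ ε_i + ε_j for all 1 ≤ i < j ≤ n and all α ∈ N_{ij}, where ε_k denotes the k-th standard unit vector. Then there exists a weight vector ω ∈ ℕ^n with ω_i ≥ 1 for all i, such that ⟨ω, α⟩ < ω_i + ω_j for all 1 ≤ i < j ≤ n and all α ∈ N_{ij}, where ⟨ω, α⟩ = ω_1 α_1 + ⋯ + ω_n α_n. -/

import Mathlib

open Finset

private lemma sum_dite_zero {κ M : Type*} [Fintype κ] [AddCommMonoid M]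
    (p : κ → Prop) [DecidablePred p] (F : Subtype p → M) :
    (∑ k, if h : p k then F ⟨k, h⟩ else 0) = ∑ z : Subtype p, F z := by
  rw [Finset.sum_dite]
  simp only [Finset.sum_const_zero, add_zero]
  exact Fintype.sum_equiv (Equiv.subtypeEquivRight (by simp)) _ _ (fun x => rfl)

private lemma exists_rat_between (LB UB : Finset ℚ)
    (h : ∀ x ∈ LB, ∀ y ∈ UB, x < y) :
    ∃ t : ℚ, (∀ x ∈ LB, x < t) ∧ (∀ y ∈ UB, t < y) := by
  rcases LB.eq_empty_or_nonempty with hL | hL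
  · rcases UB.eq_empty_or_nonempty with hU | hU
    · exact ⟨0, by simp [hL], by simp [hU]⟩
    · exact ⟨UB.min' hU - 1, by simp [hL], fun y hy => by
        have := UB.min'_le y hy; linarith⟩
  · rcases UB.eq_empty_or_nonempty with hU | hU
    · exact ⟨LB.max' hL + 1, fun x hx => by have := LB.le_max' x hx; linarith,
        by simp [hU]⟩
    · have hlt : LB.max' hL < UB.min' hU := h _ (LB.max'_mem hL) _ (UB.min'_mem hU)
      refine ⟨(LB.max' hL + UB.min' hU) / 2, ?_, ?_⟩
      · intro x hx; have := LB.le_max' x hx; linarith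
      · intro y hy; have := UB.min'_le y hy; linarith

/-- Gordan's alternative over ℚ, proved by Fourier–Motzkin elimination. -/
private theorem gordan (n : ℕ) : ∀ (κ : Type) [Fintype κ] (v : κ → Fin n → ℚ),
    (∃ ω : Fin n → ℚ, ∀ k, 0 < ∑ l, v k l * ω l) ∨
    (∃ lam : κ → ℚ, (∀ k, 0 ≤ lam k) ∧ (∃ k, lam k ≠ 0) ∧
      ∀ l, ∑ k, lam k * v k l = 0) := by
  induction n with
  | zero =>
    intro κ _ v
    rcases isEmpty_or_nonempty κ with h | h
    · exact Or.inl ⟨0, fun k => (h.false k).elim⟩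
    · exact Or.inr ⟨fun _ => 1, fun _ => zero_le_one, ⟨h.some, one_ne_zero⟩,
        fun l => Fin.elim0 l⟩
  | succ n ih =>
    intro κ _ v
    classical
    set lst := Fin.last n with hlst
    let v' : ({k : κ // v k lst = 0} ⊕ ({k : κ // 0 < v k lst} × {k : κ // v k lst < 0}))
        → Fin n → ℚ := fun k' l => match k' with
      | .inl z => v z.1 l.castSucc
      | .inr (p, q) => (-(v q.1 lst)) * v p.1 l.castSucc + (v p.1 lst) * v q.1 l.castSucc
    rcases ih _ v' with ⟨ω', hω'⟩ | ⟨lam', hnn, ⟨k0, hk0⟩, hsum⟩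
    · -- first alternative: build the new coordinate
      set s : κ → ℚ := fun k => ∑ l : Fin n, v k l.castSucc * ω' l with hs
      have hz' : ∀ z : {k : κ // v k lst = 0}, 0 < s z.1 := by
        intro z
        simpa only [v', hs] using hω' (Sum.inl z)
      have hpair : ∀ (p : {k : κ // 0 < v k lst}) (q : {k : κ // v k lst < 0}),
          0 < (-(v q.1 lst)) * s p.1 + (v p.1 lst) * s q.1 := by
        intro p q
        have h1 := hω' (Sum.inr (p, q))
        simpa only [v', hs, add_mul, Finset.sum_add_distrib, mul_assoc,
          ← Finset.mul_sum] using h1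
      set LB := (univ : Finset {k : κ // 0 < v k lst}).image
        (fun p => (- s p.1) / v p.1 lst) with hLB
      set UB := (univ : Finset {k : κ // v k lst < 0}).image
        (fun q => s q.1 / (-(v q.1 lst))) with hUB
      have hLU : ∀ x ∈ LB, ∀ y ∈ UB, x < y := by
        intro x hx y hy
        rw [hLB, Finset.mem_image] at hx
        rw [hUB, Finset.mem_image] at hy
        obtain ⟨p, -, rfl⟩ := hx
        obtain ⟨q, -, rfl⟩ := hy
        rw [div_lt_div_iff₀ p.2 (neg_pos.mpr q.2)]
        nlinarith [hpair p q]
      obtain ⟨t, htL, htU⟩ := exists_rat_between LB UB hLU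
      set ω : Fin (n + 1) → ℚ := Fin.snoc (α := fun _ => ℚ) ω' t with hw
      refine Or.inl ⟨ω, ?_⟩
      intro k
      have hsumk : ∑ l, v k l * ω l = s k + v k lst * t := by
        rw [Fin.sum_univ_castSucc]
        simp [hw, hs, hlst, Fin.snoc_castSucc, Fin.snoc_last]
      rw [hsumk]
      rcases lt_trichotomy (v k lst) 0 with hk | hk | hk
      · have hy : s k / (-(v k lst)) ∈ UB := by
          rw [hUB]
          exact Finset.mem_image_of_mem _ (Finset.mem_univ (⟨k, hk⟩ : {k : κ // v k lst < 0}))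
        have h2 := htU _ hy
        have hpos : 0 < -(v k lst) := neg_pos.mpr hk
        rw [lt_div_iff₀ hpos] at h2
        nlinarith
      · have := hz' ⟨k, hk⟩
        simp only [hk, zero_mul, add_zero]
        exact this
      · have hy : (- s k) / v k lst ∈ LB := by
          rw [hLB]
          exact Finset.mem_image_of_mem _ (Finset.mem_univ (⟨k, hk⟩ : {k : κ // 0 < v k lst}))
        have h2 := htL _ hy
        rw [div_lt_iff₀ hk] at h2
        nlinarith
    · -- second alternative: push the multipliers down
      set lam : κ → ℚ := fun k =>
        (if h : v k lst = 0 then lam' (.inl ⟨k, h⟩) else 0)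
        + (if h : 0 < v k lst then
            ∑ q : {k : κ // v k lst < 0}, lam' (.inr (⟨k, h⟩, q)) * (-(v q.1 lst)) else 0)
        + (if h : v k lst < 0 then
            ∑ p : {k : κ // 0 < v k lst}, lam' (.inr (p, ⟨k, h⟩)) * (v p.1 lst) else 0)
        with hlam
      have hterm2 : ∀ k (h : 0 < v k lst), 0 ≤
          ∑ q : {k : κ // v k lst < 0}, lam' (.inr (⟨k, h⟩, q)) * (-(v q.1 lst)) := by
        intro k h
        refine Finset.sum_nonneg fun q _ => mul_nonneg (hnn _) (by linarith [q.2])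
      have hterm3 : ∀ k (h : v k lst < 0), 0 ≤
          ∑ p : {k : κ // 0 < v k lst}, lam' (.inr (p, ⟨k, h⟩)) * (v p.1 lst) := by
        intro k h
        refine Finset.sum_nonneg fun p _ => mul_nonneg (hnn _) (le_of_lt p.2)
      have hlam_nn : ∀ k, 0 ≤ lam k := by
        intro k
        simp only [hlam]
        refine add_nonneg (add_nonneg ?_ ?_) ?_
        · split_ifs with h; exacts [hnn _, le_refl 0]
        · split_ifs with h; exacts [hterm2 k h, le_refl 0]
        · split_ifs with h; exacts [hterm3 k h, le_refl 0]
      have key : ∀ l : Fin (n + 1), ∑ k, lam k * v k l =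
          (∑ z : {k : κ // v k lst = 0}, lam' (.inl z) * v z.1 l)
          + ∑ p : {k : κ // 0 < v k lst}, ∑ q : {k : κ // v k lst < 0},
              lam' (.inr (p, q)) * ((-(v q.1 lst)) * v p.1 l + (v p.1 lst) * v q.1 l) := by
        intro l
        have e0 : ∀ k, lam k * v k l =
            (if h : v k lst = 0 then lam' (.inl ⟨k, h⟩) * v k l else 0)
            + ((if h : 0 < v k lst then
                ∑ q : {k : κ // v k lst < 0},
                  lam' (.inr (⟨k, h⟩, q)) * ((-(v q.1 lst)) * v k l) else 0)
            + (if h : v k lst < 0 then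
                ∑ p : {k : κ // 0 < v k lst},
                  lam' (.inr (p, ⟨k, h⟩)) * ((v p.1 lst) * v k l) else 0)) := by
          intro k
          simp only [hlam]
          rcases lt_trichotomy (v k lst) 0 with h | h | h
          · rw [dif_neg (by linarith), dif_neg (by linarith), dif_pos h,
              dif_neg (by linarith), dif_neg (by linarith), dif_pos h]
            simp only [zero_add, add_zero, Finset.sum_mul, mul_assoc]
          · rw [dif_pos h, dif_neg (by simp [h]), dif_neg (by simp [h]),
              dif_pos h, dif_neg (by simp [h]), dif_neg (by simp [h])]
            simp only [zero_add, add_zero]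
          · rw [dif_neg (by linarith), dif_pos h, dif_neg (by linarith),
              dif_neg (by linarith), dif_pos h, dif_neg (by linarith)]
            simp only [zero_add, add_zero, Finset.sum_mul, mul_assoc]
        calc ∑ k, lam k * v k l
            = (∑ k, if h : v k lst = 0 then lam' (.inl ⟨k, h⟩) * v k l else 0)
            + ((∑ k, if h : 0 < v k lst then
                ∑ q : {k : κ // v k lst < 0},
                  lam' (.inr (⟨k, h⟩, q)) * ((-(v q.1 lst)) * v k l) else 0)
            + (∑ k, if h : v k lst < 0 then
                ∑ p : {k : κ // 0 < v k lst},
                  lam' (.inr (p, ⟨k, h⟩)) * ((v p.1 lst) * v k l) else 0)) := by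
              rw [← Finset.sum_add_distrib, ← Finset.sum_add_distrib]
              exact Finset.sum_congr rfl fun k _ => e0 k
          _ = (∑ z : {k : κ // v k lst = 0}, lam' (.inl z) * v z.1 l)
            + ((∑ p : {k : κ // 0 < v k lst}, ∑ q : {k : κ // v k lst < 0},
                  lam' (.inr (p, q)) * ((-(v q.1 lst)) * v p.1 l))
            + (∑ q : {k : κ // v k lst < 0}, ∑ p : {k : κ // 0 < v k lst},
                  lam' (.inr (p, q)) * ((v p.1 lst) * v q.1 l))) := by
              rw [sum_dite_zero (fun k => v k lst = 0)
                    (fun z => lam' (.inl z) * v z.1 l),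
                  sum_dite_zero (fun k => 0 < v k lst)
                    (fun p => ∑ q : {k : κ // v k lst < 0},
                      lam' (.inr (p, q)) * ((-(v q.1 lst)) * v p.1 l)),
                  sum_dite_zero (fun k => v k lst < 0)
                    (fun q => ∑ p : {k : κ // 0 < v k lst},
                      lam' (.inr (p, q)) * ((v p.1 lst) * v q.1 l))]
          _ = _ := by
              rw [Finset.sum_comm (γ := {k : κ // v k lst < 0})]
              rw [← Finset.sum_add_distrib]
              congr 1
              refine Finset.sum_congr rfl fun p _ => ?_
              rw [← Finset.sum_add_distrib]
              refine Finset.sum_congr rfl fun q _ => by ring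
      refine Or.inr ⟨lam, hlam_nn, ?_, ?_⟩
      · rcases k0 with z | ⟨p, q⟩
        · refine ⟨z.1, ?_⟩
          have h1 : lam z.1 = lam' (.inl z) := by
            simp only [hlam]
            rw [dif_pos z.2, dif_neg (by simp [z.2]), dif_neg (by simp [z.2])]
            simp
          rw [h1]
          exact hk0
        · refine ⟨p.1, ne_of_gt ?_⟩
          have h1 : lam p.1 = ∑ q' : {k : κ // v k lst < 0},
              lam' (.inr (p, q')) * (-(v q'.1 lst)) := by
            simp only [hlam]
            rw [dif_neg (by simp [ne_of_gt p.2]), dif_pos p.2, dif_neg (by linarith [p.2])]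
            simp
          rw [h1]
          have hqt : 0 < lam' (.inr (p, q)) * (-(v q.1 lst)) :=
            mul_pos (lt_of_le_of_ne (hnn _) (Ne.symm hk0)) (by linarith [q.2])
          have := Finset.single_le_sum
            (f := fun q' : {k : κ // v k lst < 0} => lam' (.inr (p, q')) * (-(v q'.1 lst)))
            (fun q' _ => mul_nonneg (hnn _) (by linarith [q'.2])) (Finset.mem_univ q)
          exact lt_of_lt_of_le hqt (by simpa using this)
      · intro l
        rw [key l]
        induction l using Fin.lastCases with
        | last =>
          have h1 : (∑ z : {k : κ // v k lst = 0}, lam' (.inl z) * v z.1 lst) = 0 := by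
            refine Finset.sum_eq_zero fun z _ => by rw [z.2, mul_zero]
          have h2 : (∑ p : {k : κ // 0 < v k lst}, ∑ q : {k : κ // v k lst < 0},
              lam' (.inr (p, q)) * ((-(v q.1 lst)) * v p.1 lst + (v p.1 lst) * v q.1 lst)) = 0 := by
            refine Finset.sum_eq_zero fun p _ => Finset.sum_eq_zero fun q _ => by ring
          rw [h1, h2, add_zero]
        | cast l0 =>
          have h1 := hsum l0
          rw [Fintype.sum_sum_type, Fintype.sum_prod_type] at h1
          simpa only [v'] using h1

private lemma rat_scale (q : ℚ) (hq : 0 ≤ q) (D : ℕ) (hD : 0 < D) (hd : q.den ∣ D) :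
    ∃ m : ℕ, (m : ℚ) = D * q ∧ (0 < q → 0 < m) := by
  refine ⟨(D / q.den) * q.num.toNat, ?_, ?_⟩
  · have hden0 : ((q.den : ℚ)) ≠ 0 := by exact_mod_cast q.den_pos.ne'
    have h1 : ((D / q.den : ℕ) : ℚ) = (D : ℚ) / (q.den : ℚ) := Nat.cast_div hd hden0
    have h2 : ((q.num.toNat : ℕ) : ℚ) = (q.num : ℚ) := by
      have h3 := Int.toNat_of_nonneg (Rat.num_nonneg.mpr hq)
      exact_mod_cast congrArg (fun z : ℤ => (z : ℚ)) h3
    conv_rhs => rw [← Rat.num_div_den q]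
    rw [Nat.cast_mul, h1, h2]
    ring
  · intro hq'
    have h1 : 0 < D / q.den := Nat.div_pos (Nat.le_of_dvd hD hd) q.den_pos
    have h2 : 0 < q.num.toNat := by
      have := Rat.num_pos.mpr hq'
      omega
    positivity

/-- Suppose finite sets `N i j ⊆ ℕ^n` (for `i < j`) admit a monomial ordering
`≺` (a strict linear order compatible with addition which is well-founded) such
that `α ≺ ε_i + ε_j` for all `i < j` and all `α ∈ N i j`. Then there is a
weight vector `ω` with all entries `≥ 1` such that `⟨ω, α⟩ < ω_i + ω_j` for all
`i < j` and all `α ∈ N i j`. -/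
theorem exists_positive_weight_vector_for_filtration
    (n : ℕ) (N : Fin n → Fin n → Finset (Fin n → ℕ))
    (h : ∃ r : (Fin n → ℕ) → (Fin n → ℕ) → Prop,
      (∀ α β, r α β ∨ α = β ∨ r β α) ∧
      (∀ α, ¬ r α α) ∧
      (∀ α β γ, r α β → r β γ → r α γ) ∧
      (∀ α β γ, r α β → r (α + γ) (β + γ)) ∧
      WellFounded r ∧
      ∀ i j : Fin n, i < j → ∀ α ∈ N i j,
        r α (Pi.single i 1 + Pi.single j 1)) :
    ∃ ω : Fin n → ℕ, (∀ i, 1 ≤ ω i) ∧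
      ∀ i j : Fin n, i < j → ∀ α ∈ N i j, (∑ l, ω l * α l) < ω i + ω j := by
  classical
  obtain ⟨r, htot, hirr, htrans, hadd, hwf, hlt⟩ := h
  -- order facts
  have hnot0 : ∀ γ : Fin n → ℕ, ¬ r γ 0 := by
    intro γ hγ
    set f : ℕ → (Fin n → ℕ) := fun m => m • γ with hf
    have hdec : ∀ m, r (f (m + 1)) (f m) := by
      intro m
      have h1 := hadd γ 0 (m • γ) hγ
      have e1 : γ + m • γ = f (m + 1) := by
        show γ + m • γ = (m + 1) • γ
        rw [succ_nsmul, add_comm]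
      have e2 : (0 : Fin n → ℕ) + m • γ = f m := by
        show (0 : Fin n → ℕ) + m • γ = m • γ
        rw [zero_add]
      rwa [e1, e2] at h1
    obtain ⟨m, hm⟩ := Set.mem_range.1 (hwf.min_mem (Set.range f) ⟨f 0, 0, rfl⟩)
    exact hwf.not_lt_min _ (Set.mem_range_self (m + 1)) (hm ▸ hdec m)
  have h0lt : ∀ γ : Fin n → ℕ, γ ≠ 0 → r 0 γ := by
    intro γ hγ
    rcases htot 0 γ with h1 | h1 | h1
    · exact h1
    · exact absurd h1.symm hγ
    · exact absurd h1 (hnot0 γ)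
  -- weak order combination lemmas
  have hle_add : ∀ a b c d : Fin n → ℕ, (r a b ∨ a = b) → (r c d ∨ c = d) →
      (r (a + c) (b + d) ∨ a + c = b + d) := by
    rintro a b c d (hab | rfl) (hcd | rfl)
    · left
      refine htrans _ (b + c) _ (hadd _ _ _ hab) ?_
      have := hadd c d b hcd
      rwa [add_comm c b, add_comm d b] at this
    · exact Or.inl (hadd _ _ _ hab)
    · left
      have := hadd c d a hcd
      rwa [add_comm c a, add_comm d a] at this
    · exact Or.inr rfl
  have hr_add : ∀ a b c d : Fin n → ℕ, r a b → (r c d ∨ c = d) → r (a + c) (b + d) := by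
    rintro a b c d hab (hcd | rfl)
    · refine htrans _ (b + c) _ (hadd _ _ _ hab) ?_
      have := hadd c d b hcd
      rwa [add_comm c b, add_comm d b] at this
    · exact hadd _ _ _ hab
  have hsmul_le : ∀ (a b : Fin n → ℕ), r a b → ∀ m : ℕ, (r (m • a) (m • b) ∨ m • a = m • b) := by
    intro a b hab m
    induction m with
    | zero => simp
    | succ m ihm =>
      have := hle_add _ _ _ _ ihm (Or.inl hab)
      rwa [← succ_nsmul, ← succ_nsmul] at this
  have hr_add' : ∀ a b c d : Fin n → ℕ, (r a b ∨ a = b) → r c d → r (a + c) (b + d) := by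
    rintro a b c d (hab | rfl) hcd
    · refine htrans _ (b + c) _ (hadd _ _ _ hab) ?_
      have := hadd c d b hcd
      rwa [add_comm c b, add_comm d b] at this
    · have := hadd c d a hcd
      rwa [add_comm c a, add_comm d a] at this
  have hsmul_lt : ∀ (x y : Fin n → ℕ), r x y → ∀ m : ℕ, 0 < m → r (m • x) (m • y) := by
    intro x y hxy m hm
    obtain ⟨m', rfl⟩ := Nat.exists_eq_succ_of_ne_zero hm.ne'
    have h1 := hr_add' _ _ _ _ (hsmul_le x y hxy m') hxy
    rwa [← succ_nsmul, ← succ_nsmul] at h1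
  -- construct the index type for Gordan
  set S : Finset (Fin n × Fin n × (Fin n → ℕ)) :=
    Finset.univ.biUnion (fun ij : Fin n × Fin n =>
      if ij.1 < ij.2 then (N ij.1 ij.2).image (fun α => (ij.1, ij.2, α)) else ∅) with hS
  have hmemS : ∀ x : Fin n × Fin n × (Fin n → ℕ),
      x ∈ S ↔ x.1 < x.2.1 ∧ x.2.2 ∈ N x.1 x.2.1 := by
    intro x
    rw [hS]
    simp only [Finset.mem_biUnion, Finset.mem_univ, true_and]
    constructor
    · rintro ⟨ij, hij⟩
      split_ifs at hij with hij'
      · simp only [Finset.mem_image] at hij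
        obtain ⟨α, hα, rfl⟩ := hij
        exact ⟨hij', hα⟩
      · simp at hij
    · rintro ⟨h1, h2⟩
      refine ⟨(x.1, x.2.1), ?_⟩
      rw [if_pos h1]
      simp only [Finset.mem_image]
      exact ⟨x.2.2, h2, rfl⟩
  set a : (Fin n ⊕ {x // x ∈ S}) → (Fin n → ℕ) :=
    Sum.elim (fun _ => 0) (fun x => x.1.2.2) with ha
  set b : (Fin n ⊕ {x // x ∈ S}) → (Fin n → ℕ) :=
    Sum.elim (fun l => Pi.single l 1) (fun x => Pi.single x.1.1 1 + Pi.single x.1.2.1 1) with hb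
  have hr_ab : ∀ k, r (a k) (b k) := by
    rintro (l | x)
    · refine h0lt _ fun hcon => ?_
      have := congrFun hcon l
      simp [hb, Sum.elim_inl, Pi.single_eq_same] at this
    · obtain ⟨h1, h2⟩ := (hmemS x.1).1 x.2
      exact hlt _ _ h1 _ h2
  set v : (Fin n ⊕ {x // x ∈ S}) → Fin n → ℚ := fun k l => (b k l : ℚ) - (a k l : ℚ) with hv
  rcases gordan n _ v with ⟨ω, hω⟩ | ⟨lam, hnn, ⟨k0, hk0⟩, hzero⟩
  · -- extract natural weights
    have hωpos : ∀ l, 0 < ω l := by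
      intro l
      have h1 := hω (Sum.inl l)
      have e1 : ∑ m, v (Sum.inl l) m * ω m = ω l := by
        simp only [hv, ha, hb, Sum.elim_inl]
        simp [Pi.single_apply]
      rwa [e1] at h1
    set D : ℕ := ∏ l, (ω l).den with hD
    have hDpos : 0 < D := Finset.prod_pos (fun l _ => (ω l).den_pos)
    have hscale : ∀ l, ∃ m : ℕ, (m : ℚ) = D * ω l ∧ 0 < m := by
      intro l
      obtain ⟨m, hm1, hm2⟩ := rat_scale (ω l) (le_of_lt (hωpos l)) D hDpos
        (Finset.dvd_prod_of_mem _ (Finset.mem_univ l))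
      exact ⟨m, hm1, hm2 (hωpos l)⟩
    choose ωn hωn hωnpos using hscale
    refine ⟨ωn, fun l => hωnpos l, ?_⟩
    intro i j hij α hα
    have hk := hω (Sum.inr ⟨(i, j, α), (hmemS (i, j, α)).2 ⟨hij, hα⟩⟩)
    have e1 : ∑ m, v (Sum.inr ⟨(i, j, α), (hmemS (i, j, α)).2 ⟨hij, hα⟩⟩) m * ω m
        = ω i + ω j - ∑ m, (α m : ℚ) * ω m := by
      simp only [hv, ha, hb, Sum.elim_inr]
      push_cast
      simp only [sub_mul, add_mul, Finset.sum_sub_distrib, Finset.sum_add_distrib]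
      simp [Pi.single_apply, ite_mul, Finset.sum_ite_eq']
      have e2 : ∀ x : Fin n, ((if x = i then (1:ℚ) else 0) + if x = j then 1 else 0) * ω x
          = (if x = i then ω x else 0) + (if x = j then ω x else 0) := by
        intro x; split_ifs <;> ring
      rw [Finset.sum_congr rfl fun x _ => e2 x, Finset.sum_add_distrib]
      simp [Finset.sum_ite_eq']
    rw [e1] at hk
    have hq : ∑ m, (α m : ℚ) * ω m < ω i + ω j := by linarith
    have hqD : ∑ m, (ωn m : ℚ) * (α m : ℚ) < (ωn i : ℚ) + (ωn j : ℚ) := by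
      have e2 : ∑ m, (ωn m : ℚ) * (α m : ℚ) = D * ∑ m, (α m : ℚ) * ω m := by
        rw [Finset.mul_sum]
        refine Finset.sum_congr rfl fun m _ => by rw [hωn m]; ring
      rw [e2, hωn i, hωn j]
      have hD' : (0 : ℚ) < D := by exact_mod_cast hDpos
      calc (D : ℚ) * ∑ m, (α m : ℚ) * ω m < D * (ω i + ω j) := by
            exact (mul_lt_mul_iff_right₀ hD').mpr hq
        _ = D * ω i + D * ω j := by ring
    exact_mod_cast hqD
  · -- derive a contradiction with the monomial order
    exfalso
    set D : ℕ := ∏ k, (lam k).den with hD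
    have hDpos : 0 < D := Finset.prod_pos (fun k _ => (lam k).den_pos)
    have hscale : ∀ k, ∃ m : ℕ, (m : ℚ) = D * lam k ∧ (0 < lam k → 0 < m) := by
      intro k
      exact rat_scale (lam k) (hnn k) D hDpos (Finset.dvd_prod_of_mem _ (Finset.mem_univ k))
    choose μ hμ hμpos using hscale
    have hμk0 : 0 < μ k0 := hμpos k0 (lt_of_le_of_ne (hnn k0) (Ne.symm hk0))
    have hzero' : ∀ l, ∑ k, (μ k : ℚ) * v k l = 0 := by
      intro l
      have e1 : ∑ k, (μ k : ℚ) * v k l = D * ∑ k, lam k * v k l := by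
        rw [Finset.mul_sum]
        refine Finset.sum_congr rfl fun k _ => by rw [hμ k]; ring
      rw [e1, hzero l, mul_zero]
    have hnat : ∀ l, ∑ k, μ k * a k l = ∑ k, μ k * b k l := by
      intro l
      have h1 := hzero' l
      rw [hv] at h1
      simp only [mul_sub] at h1
      rw [Finset.sum_sub_distrib, sub_eq_zero] at h1
      have : ((∑ k, μ k * b k l : ℕ) : ℚ) = ((∑ k, μ k * a k l : ℕ) : ℚ) := by
        push_cast
        exact h1
      exact_mod_cast this.symm
    have hfun : (∑ k, μ k • a k) = ∑ k, μ k • b k := by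
      funext l
      have := hnat l
      simpa [Finset.sum_apply, Pi.smul_apply, smul_eq_mul] using this
    -- now the order contradiction
    have hstep : ∀ (t : Finset (Fin n ⊕ {x // x ∈ S})),
        (r (∑ k ∈ t, μ k • a k) (∑ k ∈ t, μ k • b k) ∨
          (∑ k ∈ t, μ k • a k) = ∑ k ∈ t, μ k • b k) := by
      intro t
      induction t using Finset.induction with
      | empty => simp
      | @insert x t' hx ih =>
        rw [Finset.sum_insert hx, Finset.sum_insert hx]
        exact hle_add _ _ _ _ (hsmul_le _ _ (hr_ab x) (μ x)) ih
    have hstrict : r (∑ k, μ k • a k) (∑ k, μ k • b k) := by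
      rw [← Finset.sum_erase_add Finset.univ _ (Finset.mem_univ k0),
          ← Finset.sum_erase_add Finset.univ _ (Finset.mem_univ k0)]
      exact hr_add' _ _ _ _ (hstep _) (hsmul_lt _ _ (hr_ab k0) _ hμk0)
    exact hirr _ (hfun ▸ hstrict)
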